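/- Let N ≥ 1 be an integer and let g:(0,∞)→[0,∞) be nonincreasing, locally absolutely continuous, with g'(h) ≤ 0 a.e. Suppose there are constants C₁>0 and λ>0 such that for a.e. h ≥ h₀ (with g(h)>0) one has g(h) ≤ C₁ h √λ · (-g'(h))^{1+1/(2N)}. Then g vanishes at some finite h; more precisely, defining H := sup{h : g(h)>0}, one has H^{1/(2N+1)} - h₀^{1/(2N+1)} ≤ (C₁√λ)^{2N/(2N+1)} g(h₀)^{1/(2N+1)}. -/

import Mathlib

open MeasureTheory Set

lemma stmt1_aux_upper {γ : ℝ} (hγ0 : 0 < γ) (hγ1 : γ ≤ 1) {s t : ℝ} (hs : 0 < s)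
    (hst : s ≤ t) : t ^ γ - s ^ γ ≤ γ * s ^ (γ - 1) * (t - s) := by
  rcases eq_or_lt_of_le hst with rfl | hlt
  · norm_num
  obtain ⟨ξ, hξ, hslope⟩ := exists_hasDerivAt_eq_slope (fun x => x ^ γ)
    (fun x => γ * x ^ (γ - 1)) hlt
    (fun x hx => (Real.continuousAt_rpow_const x γ
      (Or.inl (ne_of_gt (lt_of_lt_of_le hs hx.1)))).continuousWithinAt)
    (fun x hx => Real.hasDerivAt_rpow_const (Or.inl (ne_of_gt (hs.trans hx.1))))
  have heq : t ^ γ - s ^ γ = γ * ξ ^ (γ - 1) * (t - s) :=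
    (div_eq_iff (by linarith : t - s ≠ 0)).1 hslope.symm
  rw [heq]
  have hξs : ξ ^ (γ - 1) ≤ s ^ (γ - 1) :=
    Real.rpow_le_rpow_of_nonpos hs hξ.1.le (by linarith)
  have h1 : γ * ξ ^ (γ - 1) ≤ γ * s ^ (γ - 1) :=
    mul_le_mul_of_nonneg_left hξs hγ0.le
  exact mul_le_mul_of_nonneg_right h1 (by linarith)

lemma stmt1_aux_lower {γ : ℝ} (hγ0 : 0 < γ) (hγ1 : γ ≤ 1) {u v : ℝ} (hu : 0 < u)
    (huv : u ≤ v) : γ * v ^ (γ - 1) * (v - u) ≤ v ^ γ - u ^ γ := by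
  rcases eq_or_lt_of_le huv with rfl | hlt
  · norm_num
  obtain ⟨ξ, hξ, hslope⟩ := exists_hasDerivAt_eq_slope (fun x => x ^ γ)
    (fun x => γ * x ^ (γ - 1)) hlt
    (fun x hx => (Real.continuousAt_rpow_const x γ
      (Or.inl (ne_of_gt (lt_of_lt_of_le hu hx.1)))).continuousWithinAt)
    (fun x hx => Real.hasDerivAt_rpow_const (Or.inl (ne_of_gt (hu.trans hx.1))))
  have heq : v ^ γ - u ^ γ = γ * ξ ^ (γ - 1) * (v - u) :=
    (div_eq_iff (by linarith : v - u ≠ 0)).1 hslope.symm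
  rw [heq]
  have hξv : v ^ (γ - 1) ≤ ξ ^ (γ - 1) :=
    Real.rpow_le_rpow_of_nonpos (hu.trans hξ.1) hξ.2.le (by linarith)
  have h1 : γ * v ^ (γ - 1) ≤ γ * ξ ^ (γ - 1) :=
    mul_le_mul_of_nonneg_left hξv hγ0.le
  exact mul_le_mul_of_nonneg_right h1 (by linarith)

set_option maxHeartbeats 2000000 in
/-- Iteration/ODE lemma from the proof of Theorem 3.8 (boundedness of eigenfunctions):
if `g` is nonincreasing, nonnegative, locally absolutely continuous on `(0,∞)`,
with `g' ≤ 0` a.e., and satisfies `g(h) ≤ C₁ h √λ (-g'(h))^(1+1/(2N))` for a.e.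
`h ≥ h₀` where `g > 0`, then `g` vanishes at some finite `h`; quantitatively,
`H := sup{h : g(h) > 0}` satisfies
`H^(1/(2N+1)) - h₀^(1/(2N+1)) ≤ (C₁√λ)^(2N/(2N+1)) g(h₀)^(1/(2N+1))`. -/
theorem stmt1 (N : ℕ) (hN : 1 ≤ N) (C₁ lam h₀ : ℝ) (hC : 0 < C₁) (hlam : 0 < lam)
    (hh₀ : 0 < h₀) (g : ℝ → ℝ)
    (hmono : AntitoneOn g (Set.Ioi (0 : ℝ)))
    (hnonneg : ∀ h : ℝ, 0 < h → 0 ≤ g h)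
    (hAC : ∀ a b : ℝ, 0 < a → a ≤ b → g b - g a = ∫ t in a..b, deriv g t)
    (hderiv : ∀ᵐ h ∂(volume : Measure ℝ), 0 < h → deriv g h ≤ 0)
    (hODE : ∀ᵐ h ∂(volume : Measure ℝ), h₀ ≤ h → 0 < g h →
      g h ≤ C₁ * h * Real.sqrt lam * (-(deriv g h)) ^ (1 + 1 / (2 * (N : ℝ)))) :
    BddAbove {h : ℝ | 0 < h ∧ 0 < g h} ∧
      (sSup {h : ℝ | 0 < h ∧ 0 < g h}) ^ (1 / (2 * (N : ℝ) + 1)) -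
          h₀ ^ (1 / (2 * (N : ℝ) + 1)) ≤
        (C₁ * Real.sqrt lam) ^ (2 * (N : ℝ) / (2 * (N : ℝ) + 1)) *
          (g h₀) ^ (1 / (2 * (N : ℝ) + 1)) := by
  have hN' : (1 : ℝ) ≤ (N : ℝ) := by exact_mod_cast hN
  set γ : ℝ := 1 / (2 * (N : ℝ) + 1) with hγdef
  set β : ℝ := 2 * (N : ℝ) / (2 * (N : ℝ) + 1) with hβdef
  set α : ℝ := 1 + 1 / (2 * (N : ℝ)) with hαdef
  have h2N : (0 : ℝ) < 2 * (N : ℝ) := by linarith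
  have h2N1 : (0 : ℝ) < 2 * (N : ℝ) + 1 := by linarith
  have hγ0 : 0 < γ := by rw [hγdef]; positivity
  have hγ1 : γ ≤ 1 := by
    rw [hγdef, div_le_one h2N1]; linarith
  have hβ0 : 0 < β := by rw [hβdef]; positivity
  have hγβ : γ + β = 1 := by rw [hγdef, hβdef]; field_simp; ring
  have hβ1 : β ≤ 1 := by linarith
  have hαβ : α * β = 1 := by
    rw [hαdef, hβdef]; field_simp
  have hsl : 0 < Real.sqrt lam := Real.sqrt_pos.2 hlam
  have hCs : 0 < C₁ * Real.sqrt lam := mul_pos hC hsl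
  set K : ℝ := (C₁ * Real.sqrt lam) ^ β with hKdef
  have hK0 : 0 < K := Real.rpow_pos_of_pos hCs β
  clear_value γ β α K
  -- integrability of deriv g on compact subintervals of (0, ∞)
  have hInt : ∀ a b : ℝ, 0 < a → a ≤ b → IntervalIntegrable (deriv g) volume a b := by
    intro a b ha hab
    by_contra hni
    have h0 : g b = g a := by
      have h1 := hAC a b ha hab
      rw [intervalIntegral.integral_undef hni] at h1
      linarith
    have hconst : ∀ x ∈ Set.Icc a b, g x = g a := by
      intro x hx
      have hxa : 0 < x := lt_of_lt_of_le ha hx.1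
      have h1 : g x ≤ g a := hmono (Set.mem_Ioi.2 ha) (Set.mem_Ioi.2 hxa) hx.1
      have h2 : g b ≤ g x :=
        hmono (Set.mem_Ioi.2 hxa) (Set.mem_Ioi.2 (lt_of_lt_of_le ha hab)) hx.2
      linarith
    have hd0 : ∀ x ∈ Set.Ioo a b, deriv g x = 0 := by
      intro x hx
      have hev : g =ᶠ[nhds x] fun _ => g a := by
        filter_upwards [Ioo_mem_nhds hx.1 hx.2] with y hy
        exact hconst y (Set.Ioo_subset_Icc_self hy)
      rw [hev.deriv_eq]
      exact deriv_const x (g a)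
    apply hni
    have hb' : ∀ᵐ x ∂(volume : Measure ℝ), x ≠ b := by
      rw [MeasureTheory.ae_iff]
      simpa using measure_singleton (μ := (volume : Measure ℝ)) b
    have hz : (fun _ : ℝ => (0 : ℝ)) =ᵐ[volume.restrict (Set.uIoc a b)] deriv g := by
      rw [Filter.EventuallyEq, ae_restrict_iff' measurableSet_uIoc]
      filter_upwards [hb'] with x hxb hx
      rw [Set.uIoc_of_le hab] at hx
      exact (hd0 x ⟨hx.1, lt_of_le_of_ne hx.2 hxb⟩).symm
    exact (intervalIntegrable_const (c := (0 : ℝ))).congr_ae hz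
  -- continuity of g on compact subintervals of (0, ∞)
  have hgcont : ∀ a b : ℝ, 0 < a → a ≤ b → ContinuousOn g (Set.Icc a b) := by
    intro a b ha hab
    have ha2 : 0 < a / 2 := by linarith
    have h2a : a / 2 ≤ a := by linarith
    have h2b : a / 2 ≤ b := le_trans h2a hab
    have hii := hInt (a / 2) b ha2 h2b
    have hprim : ContinuousOn (fun x => g (a / 2) + ∫ t in (a / 2)..x, deriv g t)
        (Set.uIcc (a / 2) b) :=
      continuousOn_const.add
        (intervalIntegral.continuousOn_primitive_interval' hii Set.left_mem_uIcc)
    have hsub : Set.Icc a b ⊆ Set.uIcc (a / 2) b := by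
      rw [Set.uIcc_of_le h2b]
      exact Set.Icc_subset_Icc h2a le_rfl
    refine ContinuousOn.congr (hprim.mono hsub) ?_
    intro x hx
    have h1 := hAC (a / 2) x ha2 (le_trans h2a hx.1)
    simp only
    linarith
  -- key integral inequality
  have hKey : ∀ s t : ℝ, h₀ ≤ s → s ≤ t → 0 < g t →
      (t - s) * (g t / (C₁ * Real.sqrt lam * t)) ^ β ≤ g s - g t := by
    intro s t hs hst hgt
    have hs0 : 0 < s := lt_of_lt_of_le hh₀ hs
    have ht0 : 0 < t := lt_of_lt_of_le hs0 hst
    have hdenom : 0 < C₁ * Real.sqrt lam * t := by positivity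
    set c : ℝ := (g t / (C₁ * Real.sqrt lam * t)) ^ β with hcdef
    have hae : (fun _ : ℝ => c) ≤ᵐ[volume.restrict (Set.Icc s t)] fun x => -deriv g x := by
      rw [Filter.EventuallyLE, ae_restrict_iff' measurableSet_Icc]
      filter_upwards [hODE, hderiv] with x hx1 hx2 hxmem
      have hx0 : 0 < x := lt_of_lt_of_le hs0 hxmem.1
      have hgx : g t ≤ g x := hmono (Set.mem_Ioi.2 hx0) (Set.mem_Ioi.2 ht0) hxmem.2
      have hgx0 : 0 < g x := lt_of_lt_of_le hgt hgx
      have hode := hx1 (le_trans hs hxmem.1) hgx0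
      have hd := hx2 hx0
      have hnd : 0 ≤ -deriv g x := by linarith
      have hAx : 0 < C₁ * x * Real.sqrt lam := by positivity
      have h1 : g x / (C₁ * x * Real.sqrt lam) ≤ (-deriv g x) ^ α := by
        rw [div_le_iff₀ hAx]
        exact hode.trans_eq (mul_comm _ _)
      have h2 : g t / (C₁ * Real.sqrt lam * t) ≤ g x / (C₁ * x * Real.sqrt lam) := by
        apply div_le_div₀ hgx0.le hgx hAx
        nlinarith [hsl.le, hxmem.2, hC.le]
      have h3 : g t / (C₁ * Real.sqrt lam * t) ≤ (-deriv g x) ^ α := le_trans h2 h1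
      calc c ≤ ((-deriv g x) ^ α) ^ β := Real.rpow_le_rpow (by positivity) h3 hβ0.le
        _ = (-deriv g x) ^ (α * β) := (Real.rpow_mul hnd α β).symm
        _ = -deriv g x := by rw [hαβ, Real.rpow_one]
    have hii := hInt s t hs0 hst
    have h5 : (∫ _x in s..t, c) ≤ ∫ x in s..t, -deriv g x :=
      intervalIntegral.integral_mono_ae_restrict hst intervalIntegrable_const hii.neg hae
    rw [intervalIntegral.integral_const, smul_eq_mul, intervalIntegral.integral_neg] at h5
    have h6 := hAC s t hs0 hst
    linarith
  -- main inequality with epsilon slack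
  have hMainε : ∀ b : ℝ, h₀ ≤ b → 0 < g b → ∀ ε : ℝ, 0 < ε →
      b ^ γ - h₀ ^ γ ≤ (1 + ε) * K * (g h₀ ^ γ - g b ^ γ) := by
    intro b hb hgb ε hε
    have hb0 : 0 < b := lt_of_lt_of_le hh₀ hb
    set Φ : ℝ → ℝ := fun t => (1 + ε) * K * (g h₀ ^ γ - g t ^ γ) with hΦdef
    set S : Set ℝ := {t ∈ Set.Icc h₀ b | t ^ γ - h₀ ^ γ ≤ Φ t} with hSdef
    have hgpos : ∀ x ∈ Set.Icc h₀ b, 0 < g x := fun x hx =>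
      lt_of_lt_of_le hgb
        (hmono (Set.mem_Ioi.2 (lt_of_lt_of_le hh₀ hx.1)) (Set.mem_Ioi.2 hb0) hx.2)
    have hgcont' := hgcont h₀ b hh₀ hb
    have hcont1 : ContinuousOn (fun t : ℝ => t ^ γ - h₀ ^ γ) (Set.Icc h₀ b) := by
      refine ContinuousOn.sub ?_ continuousOn_const
      intro x hx
      exact (Real.continuousAt_rpow_const x γ
        (Or.inl (ne_of_gt (lt_of_lt_of_le hh₀ hx.1)))).continuousWithinAt
    have hcont2 : ContinuousOn Φ (Set.Icc h₀ b) := by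
      apply continuousOn_const.mul
      exact ContinuousOn.sub continuousOn_const
        (hgcont'.rpow_const fun x hx => Or.inl (ne_of_gt (hgpos x hx)))
    have hSclosed : IsClosed S := isClosed_Icc.isClosed_le hcont1 hcont2
    have hSne : S.Nonempty := ⟨h₀, ⟨le_refl h₀, hb⟩, by simp [hΦdef]⟩
    have hSsub : S ⊆ Set.Icc h₀ b := fun x hx => hx.1
    have hScomp : IsCompact S := isCompact_Icc.of_isClosed_subset hSclosed hSsub
    set c := sSup S with hcdef
    have hcS : c ∈ S := hScomp.sSup_mem hSne
    have hcb : c ≤ b := (hSsub hcS).2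
    have hch : h₀ ≤ c := (hSsub hcS).1
    rcases eq_or_lt_of_le hcb with hceq | hclt
    · have := hcS.2; rw [hceq] at this; exact this
    · exfalso
      have hc0 : 0 < c := lt_of_lt_of_le hh₀ hch
      have hgc : 0 < g c := hgpos c (hSsub hcS)
      set ρ : ℝ → ℝ := fun t => (1 + ε) * (g t ^ β * c ^ β) - g c ^ β * t ^ β with hρdef
      have hρc : 0 < ρ c := by
        have h1 : 0 < g c ^ β * c ^ β := by positivity
        simp only [hρdef]
        nlinarith
      have hgcontcb := hgcont c b hc0 hclt.le
      have hgposcb : ∀ x ∈ Set.Icc c b, 0 < g x := fun x hx =>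
        hgpos x ⟨le_trans hch hx.1, hx.2⟩
      have hρcont : ContinuousOn ρ (Set.Icc c b) := by
        apply ContinuousOn.sub
        · exact continuousOn_const.mul
            ((hgcontcb.rpow_const fun x hx =>
              Or.inl (ne_of_gt (hgposcb x hx))).mul continuousOn_const)
        · exact continuousOn_const.mul (fun x hx =>
            (Real.continuousAt_rpow_const x β
              (Or.inl (ne_of_gt (lt_of_lt_of_le hc0 hx.1)))).continuousWithinAt)
      have hcwa : ContinuousWithinAt ρ (Set.Ioc c b) c :=
        (hρcont c ⟨le_refl c, hclt.le⟩).mono Set.Ioc_subset_Icc_self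
      have hne : (nhdsWithin c (Set.Ioc c b)).NeBot := by
        refine mem_closure_iff_nhdsWithin_neBot.1 ?_
        rw [closure_Ioc hclt.ne]
        exact ⟨le_refl c, hclt.le⟩
      have hev1 : ∀ᶠ t in nhdsWithin c (Set.Ioc c b), 0 < ρ t :=
        hcwa.eventually (eventually_gt_nhds hρc)
      obtain ⟨t, hρt, htmem⟩ := (hev1.and eventually_mem_nhdsWithin).exists
      have htc : c < t := htmem.1
      have htb : t ≤ b := htmem.2
      have ht0 : 0 < t := lt_trans hc0 htc
      have hgt : 0 < g t := hgposcb t ⟨htc.le, htb⟩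
      have hKey' := hKey c t hch htc.le hgt
      have hup : t ^ γ - c ^ γ ≤ γ * c ^ (γ - 1) * (t - c) :=
        stmt1_aux_upper hγ0 hγ1 hc0 htc.le
      have hgtc : g t ≤ g c :=
        hmono (Set.mem_Ioi.2 hc0) (Set.mem_Ioi.2 ht0) htc.le
      have hlow : γ * g c ^ (γ - 1) * (g c - g t) ≤ g c ^ γ - g t ^ γ :=
        stmt1_aux_lower hγ0 hγ1 hgt hgtc
      -- algebraic step
      have hstep : γ * c ^ (γ - 1) * (t - c) ≤
          (1 + ε) * K * (γ * g c ^ (γ - 1) *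
            ((t - c) * (g t / (C₁ * Real.sqrt lam * t)) ^ β)) := by
        have hγ1' : γ - 1 = -β := by linarith
        have e1 : c ^ (γ - 1) = (c ^ β)⁻¹ := by
          rw [hγ1', Real.rpow_neg hc0.le]
        have e2 : g c ^ (γ - 1) = (g c ^ β)⁻¹ := by
          rw [hγ1', Real.rpow_neg hgc.le]
        have e3 : (g t / (C₁ * Real.sqrt lam * t)) ^ β = g t ^ β / (K * t ^ β) := by
          rw [Real.div_rpow hgt.le (by positivity), Real.mul_rpow hCs.le ht0.le, ← hKdef]
        rw [e1, e2, e3]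
        have p1 : 0 < c ^ β := Real.rpow_pos_of_pos hc0 β
        have p2 : 0 < g c ^ β := Real.rpow_pos_of_pos hgc β
        have p3 : 0 < g t ^ β := Real.rpow_pos_of_pos hgt β
        have p4 : 0 < t ^ β := Real.rpow_pos_of_pos ht0 β
        have htc' : 0 < t - c := sub_pos.2 htc
        have key : g c ^ β * t ^ β ≤ (1 + ε) * (g t ^ β * c ^ β) := by
          simp only [hρdef] at hρt
          linarith
        have lhs_eq : γ * (c ^ β)⁻¹ * (t - c) = γ * (t - c) / c ^ β := by ring
        have rhs_eq : (1 + ε) * K * (γ * (g c ^ β)⁻¹ * ((t - c) * (g t ^ β / (K * t ^ β)))) =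
            (1 + ε) * γ * (t - c) * g t ^ β / (g c ^ β * t ^ β) := by
          field_simp
        rw [lhs_eq, rhs_eq, div_le_div_iff₀ p1 (mul_pos p2 p4)]
        calc γ * (t - c) * (g c ^ β * t ^ β)
            ≤ γ * (t - c) * ((1 + ε) * (g t ^ β * c ^ β)) :=
              mul_le_mul_of_nonneg_left key (mul_pos hγ0 htc').le
          _ = (1 + ε) * γ * (t - c) * g t ^ β * c ^ β := by ring
      have hchain : t ^ γ - c ^ γ ≤ (1 + ε) * K * (g c ^ γ - g t ^ γ) := by
        have h8 : γ * g c ^ (γ - 1) *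
              ((t - c) * (g t / (C₁ * Real.sqrt lam * t)) ^ β) ≤
            γ * g c ^ (γ - 1) * (g c - g t) :=
          mul_le_mul_of_nonneg_left hKey'
            (mul_nonneg hγ0.le (Real.rpow_nonneg hgc.le _))
        have h9 := mul_le_mul_of_nonneg_left h8 (mul_nonneg (by linarith : (0:ℝ) ≤ 1 + ε) hK0.le)
        have h10 := mul_le_mul_of_nonneg_left hlow (mul_nonneg (by linarith : (0:ℝ) ≤ 1 + ε) hK0.le)
        linarith [hup, hstep]
      have htS : t ∈ S := by
        refine ⟨⟨le_trans hch htc.le, htb⟩, ?_⟩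
        have hcineq := hcS.2
        simp only [hΦdef] at hcineq ⊢
        linarith [hchain]
      have hts := le_csSup hScomp.bddAbove htS
      rw [← hcdef] at hts
      linarith
  -- remove epsilon
  have hMain : ∀ b : ℝ, h₀ ≤ b → 0 < g b →
      b ^ γ - h₀ ^ γ ≤ K * (g h₀ ^ γ - g b ^ γ) := by
    intro b hb hgb
    have hb0 : 0 < b := lt_of_lt_of_le hh₀ hb
    obtain ⟨L, hL⟩ : ∃ L : ℝ, L = b ^ γ - h₀ ^ γ := ⟨_, rfl⟩
    obtain ⟨Y, hY⟩ : ∃ Y : ℝ, Y = K * (g h₀ ^ γ - g b ^ γ) := ⟨_, rfl⟩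
    rw [← hL, ← hY]
    have hY0 : 0 ≤ Y := by
      have h1 : g b ≤ g h₀ := hmono (Set.mem_Ioi.2 hh₀) (Set.mem_Ioi.2 hb0) hb
      have h2 : g b ^ γ ≤ g h₀ ^ γ := Real.rpow_le_rpow (hnonneg b hb0) h1 hγ0.le
      rw [hY]
      apply mul_nonneg hK0.le
      linarith
    by_contra hcon
    push_neg at hcon
    rcases eq_or_lt_of_le hY0 with hY0' | hY0'
    · have h1 := hMainε b hb hgb 1 one_pos
      have h2 : (1 + (1:ℝ)) * K * (g h₀ ^ γ - g b ^ γ) = 2 * Y := by rw [hY]; ring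
      rw [h2, ← hL] at h1
      linarith
    · have hεpos : 0 < (L - Y) / (2 * Y) := div_pos (by linarith) (by linarith)
      have h1 := hMainε b hb hgb _ hεpos
      have h2 : (1 + (L - Y) / (2 * Y)) * K * (g h₀ ^ γ - g b ^ γ) =
          (1 + (L - Y) / (2 * Y)) * Y := by rw [hY]; ring
      have hYne : Y ≠ 0 := ne_of_gt hY0'
      have h3 : (1 + (L - Y) / (2 * Y)) * Y = Y + (L - Y) / 2 := by
        rw [add_mul, one_mul, div_mul_eq_mul_div, mul_comm 2 Y, ← div_div,
          mul_div_cancel_right₀ _ hYne]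
      rw [h2, h3, ← hL] at h1
      linarith
  -- conclusion
  set T : Set ℝ := {h : ℝ | 0 < h ∧ 0 < g h} with hT
  set M : ℝ := h₀ ^ γ + K * g h₀ ^ γ with hM
  have hM0 : 0 < M := by
    have h1 : 0 < h₀ ^ γ := Real.rpow_pos_of_pos hh₀ γ
    have h2 : 0 ≤ K * g h₀ ^ γ :=
      mul_nonneg hK0.le (Real.rpow_nonneg (hnonneg h₀ hh₀) γ)
    linarith
  have hBd : ∀ x ∈ T, x ^ γ ≤ M := by
    intro x hx
    obtain ⟨hx0, hgx⟩ := hx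
    rcases le_total x h₀ with hxh | hxh
    · have h1 : x ^ γ ≤ h₀ ^ γ := Real.rpow_le_rpow hx0.le hxh hγ0.le
      have h2 : 0 ≤ K * g h₀ ^ γ :=
        mul_nonneg hK0.le (Real.rpow_nonneg (hnonneg h₀ hh₀) γ)
      rw [hM]; linarith
    · have h1 := hMain x hxh hgx
      have h2 : 0 ≤ K * g x ^ γ :=
        mul_nonneg hK0.le (Real.rpow_nonneg (hnonneg x hx0) γ)
      rw [hM]; nlinarith
  have hBd' : ∀ x ∈ T, x ≤ M ^ (1 / γ) := by
    intro x hx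
    have h1 : (x ^ γ) ^ (1 / γ) ≤ M ^ (1 / γ) :=
      Real.rpow_le_rpow (Real.rpow_nonneg hx.1.le γ) (hBd x hx) (by positivity)
    rwa [← Real.rpow_mul hx.1.le, mul_one_div, div_self hγ0.ne', Real.rpow_one] at h1
  have hBdd : BddAbove T := ⟨M ^ (1 / γ), hBd'⟩
  refine ⟨hBdd, ?_⟩
  rcases Set.eq_empty_or_nonempty T with hTe | hTne
  · rw [hTe, Real.sSup_empty, Real.zero_rpow hγ0.ne']
    have h1 : 0 ≤ K * g h₀ ^ γ :=
      mul_nonneg hK0.le (Real.rpow_nonneg (hnonneg h₀ hh₀) γ)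
    have h2 : 0 < h₀ ^ γ := Real.rpow_pos_of_pos hh₀ γ
    linarith
  · obtain ⟨x₀, hx₀⟩ := hTne
    have hH0 : 0 < sSup T := lt_of_lt_of_le hx₀.1 (le_csSup hBdd hx₀)
    have hHM : sSup T ≤ M ^ (1 / γ) := csSup_le ⟨x₀, hx₀⟩ hBd'
    have h1 : sSup T ^ γ ≤ (M ^ (1 / γ)) ^ γ :=
      Real.rpow_le_rpow hH0.le hHM hγ0.le
    have h2 : (M ^ (1 / γ)) ^ γ = M := by
      rw [← Real.rpow_mul hM0.le, one_div, inv_mul_cancel₀ hγ0.ne', Real.rpow_one]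
    rw [h2] at h1
    rw [hM] at h1
    linarith
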